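/- Let f be an equitorsion third-type almost geodesic mapping with deformation rule L̄^i_{(jk)} = L^i_{(jk)} + ψ_j δ^i_k + ψ_k δ^i_j + 2 σ_{jk} φ^i, where σ is symmetric. Then the generalized Thomas-type object T̃^i_{jk} = L^i_{(jk)} − (1/(N+1)) δ^i_k ( L^α_{(jα)} + σ_{jα} φ^α ) − (1/(N+1)) δ^i_j ( L^α_{(kα)} + σ_{kα} φ^α ) + σ_{jk} φ^i satisfies T̃̄^i_{jk} = T̃^i_{jk}, where T̃̄ is built in the same way from L̄, the same φ and the inverse mapping data σ̄_{jk} = −σ_{jk}. -/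
import Mathlib

open Finset

/-- total invariance of the generalized Thomas-type object
T̃^i_{jk} under an equitorsion almost geodesic mapping of the third type,
where the barred object is built from L̄ and σ̄ = −σ. -/
theorem generalized_thomas_invariant (N : ℕ) (hN : 1 ≤ N)
    (L Lb : Fin N → Fin N → Fin N → ℝ)
    (ψ : Fin N → ℝ) (σ : Fin N → Fin N → ℝ) (φ : Fin N → ℝ)
    (hL : ∀ i j k, L i j k = L i k j)
    (hLb : ∀ i j k, Lb i j k = Lb i k j)
    (hσ : ∀ j k, σ j k = σ k j)
    (h : ∀ i j k, Lb i j k = L i j k + ψ j * (if i = k then (1:ℝ) else 0)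
        + ψ k * (if i = j then (1:ℝ) else 0) + 2 * σ j k * φ i) :
    ∀ i j k,
      Lb i j k
        - (1/((N:ℝ)+1)) * (if i = k then (1:ℝ) else 0)
            * ((∑ α, Lb α j α) + ∑ α, (-σ j α) * φ α)
        - (1/((N:ℝ)+1)) * (if i = j then (1:ℝ) else 0)
            * ((∑ α, Lb α k α) + ∑ α, (-σ k α) * φ α)
        + (-σ j k) * φ i
      = L i j k
        - (1/((N:ℝ)+1)) * (if i = k then (1:ℝ) else 0)
            * ((∑ α, L α j α) + ∑ α, σ j α * φ α)
        - (1/((N:ℝ)+1)) * (if i = j then (1:ℝ) else 0)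
            * ((∑ α, L α k α) + ∑ α, σ k α * φ α)
        + σ j k * φ i := by
  have hne : (N:ℝ) + 1 ≠ 0 := by positivity
  have hs : ∀ j, ∑ α, Lb α j α
      = (∑ α, L α j α) + ((N:ℝ)+1) * ψ j + 2 * ∑ α, σ j α * φ α := by
    intro j
    simp only [h]
    rw [Finset.sum_add_distrib, Finset.sum_add_distrib, Finset.sum_add_distrib]
    simp [Finset.sum_ite_eq', Finset.mul_sum, mul_comm, mul_assoc, mul_left_comm,
      Finset.card_univ]
    ring
  intro i j k
  rw [h i j k, hs j, hs k]
  simp only [Finset.sum_neg_distrib, neg_mul, Finset.sum_neg_distrib]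
  by_cases hik : i = k <;> by_cases hij : i = j <;>
    [skip; skip; skip; skip]
  · have hjk : j = k := hij.symm.trans hik
    simp [hik, hij, hjk]; field_simp; ring
  · have hkj : ¬ k = j := fun e => hij (hik.trans e)
    have hjk2 : ¬ j = k := fun e => hkj e.symm
    simp [hik, hij, hkj, hjk2]; field_simp; ring
  · have hjk : ¬ j = k := fun e => hik (hij.trans e)
    have hkj2 : ¬ k = j := fun e => hjk e.symm
    simp [hik, hij, hjk, hkj2]; field_simp; ring
  · simp only [if_neg hik, if_neg hij]; ring
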